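/- Fundamental Theorem of GSTE: for a closure function F, valuation φ, and assertion graph G = (V, E, ant, cons), the defining sequence graph of the consequent is below the defining trajectory graph of the antecedent ([cons]_φ ≤ [ant]^F_φ for all φ) if and only if every trajectory graph of F satisfying ant also satisfies cons (for all φ), where satisfaction of a formula function f by Σ is defined as [f]_φ ≤ Σ edge-wise. -/

import Mathlib

inductive V : Type
  | zero | one | X | T
deriving DecidableEq

instance instFintypeV : Fintype V :=
  Fintype.ofList [V.zero, V.one, V.X, V.T] (fun x => by cases x <;> simp)

def vleB : V → V → Bool := fun a b =>
  a = b || a = V.X || b = V.T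

def vlub : V → V → V
  | V.X, b => b
  | a, V.X => a
  | a, b => if a = b then a else V.T

def vglb : V → V → V
  | V.T, b => b
  | a, V.T => a
  | a, b => if a = b then a else V.X

instance : LE V := ⟨fun a b => vleB a b = true⟩
instance : DecidableRel (α := V) (· ≤ ·) := fun a b => inferInstanceAs (Decidable (vleB a b = true))

instance : Lattice V where
  le := (· ≤ ·)
  le_refl := by decide
  le_trans := by decide
  le_antisymm := by decide
  sup := vlub
  le_sup_left := by decide
  le_sup_right := by decide
  sup_le := by decide
  inf := vglb
  inf_le_left := by decide
  inf_le_right := by decide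
  le_inf := by decide

instance : BoundedOrder V where
  top := V.T
  le_top := by decide
  bot := V.X
  bot_le := by decide

def vand : V → V → V
  | V.T, _ => V.T
  | _, V.T => V.T
  | V.zero, _ => V.zero
  | _, V.zero => V.zero
  | V.one, V.one => V.one
  | _, _ => V.X

def vor : V → V → V
  | V.T, _ => V.T
  | _, V.T => V.T
  | V.one, _ => V.one
  | _, V.one => V.one
  | V.zero, V.zero => V.zero
  | _, _ => V.X

def vnot : V → V
  | V.zero => V.one
  | V.one => V.zero
  | V.X => V.X
  | V.T => V.T


/-- Formulas of next-time-free trajectory evaluation logic (GTEL) over circuit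
nodes `Node` and symbolic constants `W`:
`f ::= n is 0 | n is 1 | f₁ and f₂ | P → f`. -/
inductive GTEL (Node W : Type) : Type
  | isb (n : Node) (b : Bool)
  | conj (f g : GTEL Node W)
  | guard (P : (W → Bool) → Bool) (f : GTEL Node W)

/-- The lattice value corresponding to a Boolean. -/
def boolV (b : Bool) : V := if b then V.one else V.zero

/-- Satisfaction of a GTEL formula by a circuit state `s` under a valuation `φ`
of the symbolic constants. -/
def satG {Node W : Type} (φ : W → Bool) (s : Node → V) : GTEL Node W → Prop
  | .isb n b => s n = boolV b
  | .conj f g => satG φ s f ∧ satG φ s g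
  | .guard P f => P φ = true → satG φ s f

/-- The defining (weakest) state of a GTEL formula under a valuation `φ`. -/
def defState {Node W : Type} [DecidableEq Node] (φ : W → Bool) :
    GTEL Node W → Node → V
  | .isb n b => fun m => if m = n then boolV b else V.X
  | .conj f g => defState φ f ⊔ defState φ g
  | .guard P f => if P φ then defState φ f else fun _ => V.X

/-- The defining sequence graph of an antecedent/consequent function under a
valuation `φ`. -/
def defSG {Node W E : Type} [DecidableEq Node] (φ : W → Bool)
    (ant : E → GTEL Node W) : E → Node → V :=
  fun e => defState φ (ant e)

theorem ClosureOperator.le_closure_iff_forall_isClosed {α : Type*} [Preorder α]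
    (c : ClosureOperator α) {x y : α} :
    x ≤ c y ↔ ∀ z, c.IsClosed z → y ≤ z → x ≤ z :=
  ⟨fun h _ hz hyz => h.trans (c.closure_min hyz hz),
    fun h => h _ (c.isClosed_closure y) (c.le_closure y)⟩

/-- Fundamental Theorem of GSTE: the defining sequence graph of the consequent lies
below the defining trajectory graph of the antecedent (for all valuations φ) iff
every trajectory graph satisfying the antecedent satisfies the consequent (for all
φ), where satisfaction of a formula function `f` by `Σ` is `[f]_φ ≤ Σ` edge-wise. -/
theorem fundamental_theorem_of_GSTE {Node W E : Type} [DecidableEq Node]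
    (Fsg : (E → Node → V) → (E → Node → V))
    (hmono : ∀ S1 S2 : E → Node → V, S1 ≤ S2 → Fsg S1 ≤ Fsg S2)
    (hidem : ∀ Sg : E → Node → V, Fsg (Fsg Sg) = Fsg Sg)
    (hext : ∀ Sg : E → Node → V, Sg ≤ Fsg Sg)
    (ant cons : E → GTEL Node W) :
    (∀ φ : W → Bool, defSG φ cons ≤ Fsg (defSG φ ant)) ↔
      (∀ (φ : W → Bool) (Sg : E → Node → V), Fsg Sg = Sg →
        defSG φ ant ≤ Sg → defSG φ cons ≤ Sg) := by
  let c : ClosureOperator (E → Node → V) :=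
    .mk' Fsg (fun S1 S2 => hmono S1 S2) hext (fun Sg => (hidem Sg).le)
  refine forall_congr' fun _ => c.le_closure_iff_forall_isClosed.trans ?_
  exact forall_congr' fun _ => imp_congr_left c.isClosed_iff
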